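/- Assume the Halpern setting: Q* : S × A → ℝ and g* ∈ ℝ satisfy 𝒯 Q* = Q* + g* • 1, ε ≥ 0, n ∈ ℕ, sequences Q, T : ℕ → (S × A → ℝ) satisfy Q k = (2/(k+2)) • Q 0 + (k/(k+2)) • T (k−1) for all 1 ≤ k ≤ n and ‖T k − 𝒯 (Q k)‖∞ ≤ ε for all 0 ≤ k ≤ n, and Sp(T k − T (k−1)) ≤ Sp(Q k − Q (k−1)) for all 1 ≤ k ≤ n. Then for every k with 1 ≤ k ≤ n: Sp(Q k − Q (k−1)) ≤ 4 * Sp(Q 0 − Q*) / (k+1) + 2 * ε. -/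
import Mathlib

open Finset

noncomputable def supNorm {X : Type*} [Fintype X] [Nonempty X] (v : X → ℝ) : ℝ :=
  Finset.univ.sup' Finset.univ_nonempty fun x => |v x|

noncomputable def spanSN {X : Type*} [Fintype X] [Nonempty X] (v : X → ℝ) : ℝ :=
  (Finset.univ.sup' Finset.univ_nonempty v) - (Finset.univ.inf' Finset.univ_nonempty v)

noncomputable def sigma' {S A : Type*} [Fintype S] (P : S → A → Set (S → ℝ))
    (h : S → ℝ) (s : S) (a : A) : ℝ :=
  sInf {x : ℝ | ∃ p ∈ P s a, x = ∑ s', p s' * h s'}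

noncomputable def bellman {S A : Type*} [Fintype S] [Fintype A] [Nonempty A]
    (P : S → A → Set (S → ℝ)) (r : S → A → ℝ) (Q : S × A → ℝ) : S × A → ℝ :=
  fun sa => r sa.1 sa.2 +
    sigma' P (fun s' => Finset.univ.sup' Finset.univ_nonempty fun a' => Q (s', a')) sa.1 sa.2

section auxSpan
variable {X : Type*} [Fintype X] [Nonempty X]

lemma le_mySup (v : X → ℝ) (x : X) : v x ≤ Finset.univ.sup' Finset.univ_nonempty v :=
  Finset.le_sup' v (Finset.mem_univ x)

lemma myInf_le (v : X → ℝ) (x : X) : Finset.univ.inf' Finset.univ_nonempty v ≤ v x :=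
  Finset.inf'_le v (Finset.mem_univ x)

lemma spanSN_nonneg (v : X → ℝ) : 0 ≤ spanSN v := by
  obtain ⟨x⟩ := (inferInstance : Nonempty X)
  have h1 := le_mySup v x
  have h2 := myInf_le v x
  simp only [spanSN]; linarith

lemma spanSN_add_le (u v : X → ℝ) : spanSN (u + v) ≤ spanSN u + spanSN v := by
  have h1 : Finset.univ.sup' Finset.univ_nonempty (u + v)
      ≤ Finset.univ.sup' Finset.univ_nonempty u + Finset.univ.sup' Finset.univ_nonempty v :=
    Finset.sup'_le _ _ fun x _ => add_le_add (le_mySup u x) (le_mySup v x)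
  have h2 : Finset.univ.inf' Finset.univ_nonempty u + Finset.univ.inf' Finset.univ_nonempty v
      ≤ Finset.univ.inf' Finset.univ_nonempty (u + v) :=
    Finset.le_inf' _ _ fun x _ => add_le_add (myInf_le u x) (myInf_le v x)
  simp only [spanSN] at *; linarith

lemma spanSN_neg_le (v : X → ℝ) : spanSN (-v) ≤ spanSN v := by
  have h1 : Finset.univ.sup' Finset.univ_nonempty (-v)
      ≤ -(Finset.univ.inf' Finset.univ_nonempty v) :=
    Finset.sup'_le _ _ fun x _ => by have := myInf_le v x; simp only [Pi.neg_apply]; linarith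
  have h2 : -(Finset.univ.sup' Finset.univ_nonempty v)
      ≤ Finset.univ.inf' Finset.univ_nonempty (-v) :=
    Finset.le_inf' _ _ fun x _ => by have := le_mySup v x; simp only [Pi.neg_apply]; linarith
  simp only [spanSN] at *; linarith

lemma spanSN_sub_le (u v : X → ℝ) : spanSN (u - v) ≤ spanSN u + spanSN v := by
  rw [sub_eq_add_neg]
  exact (spanSN_add_le u (-v)).trans (by linarith [spanSN_neg_le v])

lemma spanSN_smul_le (c : ℝ) (hc : 0 ≤ c) (v : X → ℝ) : spanSN (c • v) ≤ c * spanSN v := by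
  have h1 : Finset.univ.sup' Finset.univ_nonempty (c • v)
      ≤ c * Finset.univ.sup' Finset.univ_nonempty v :=
    Finset.sup'_le _ _ fun x _ => by
      simp only [Pi.smul_apply, smul_eq_mul]
      exact mul_le_mul_of_nonneg_left (le_mySup v x) hc
  have h2 : c * Finset.univ.inf' Finset.univ_nonempty v
      ≤ Finset.univ.inf' Finset.univ_nonempty (c • v) :=
    Finset.le_inf' _ _ fun x _ => by
      simp only [Pi.smul_apply, smul_eq_mul]
      exact mul_le_mul_of_nonneg_left (myInf_le v x) hc
  simp only [spanSN] at *; nlinarith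

lemma spanSN_add_const_le (v : X → ℝ) (g : ℝ) : spanSN (v + g • (1 : X → ℝ)) ≤ spanSN v := by
  have h1 : Finset.univ.sup' Finset.univ_nonempty (v + g • (1 : X → ℝ))
      ≤ Finset.univ.sup' Finset.univ_nonempty v + g :=
    Finset.sup'_le _ _ fun x _ => by
      simp only [Pi.add_apply, Pi.smul_apply, Pi.one_apply, smul_eq_mul, mul_one]
      linarith [le_mySup v x]
  have h2 : Finset.univ.inf' Finset.univ_nonempty v + g
      ≤ Finset.univ.inf' Finset.univ_nonempty (v + g • (1 : X → ℝ)) :=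
    Finset.le_inf' _ _ fun x _ => by
      simp only [Pi.add_apply, Pi.smul_apply, Pi.one_apply, smul_eq_mul, mul_one]
      linarith [myInf_le v x]
  simp only [spanSN] at *; linarith

lemma spanSN_le_two_supNorm (v : X → ℝ) : spanSN v ≤ 2 * supNorm v := by
  have h1 : Finset.univ.sup' Finset.univ_nonempty v ≤ supNorm v :=
    Finset.sup'_le _ _ fun x _ =>
      (le_abs_self (v x)).trans (le_mySup (fun x => |v x|) x)
  have h2 : -supNorm v ≤ Finset.univ.inf' Finset.univ_nonempty v :=
    Finset.le_inf' _ _ fun x _ => by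
      have := (le_mySup (fun x => |v x|) x)
      have := abs_nonneg (v x)
      have := neg_abs_le (v x)
      simp only [supNorm]; linarith
  simp only [spanSN, supNorm] at *; linarith

end auxSpan

section auxBellman
variable {S A : Type*} [Fintype S] [Fintype A] [Nonempty S] [Nonempty A]

omit [Fintype A] [Nonempty A] in
lemma sigma'_le_aux (P : S → A → Set (S → ℝ))
    (hne : ∀ s a, (P s a).Nonempty) (hsub : ∀ s a, P s a ⊆ stdSimplex ℝ S)
    (h1 h2 : S → ℝ) (s : S) (a : A) :
    sigma' P h1 s a ≤ sigma' P h2 s a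
      + Finset.univ.sup' Finset.univ_nonempty (fun s' => h1 s' - h2 s') := by
  have bdd : ∀ h : S → ℝ, BddBelow {x : ℝ | ∃ p ∈ P s a, x = ∑ s', p s' * h s'} := by
    intro h
    refine ⟨Finset.univ.inf' Finset.univ_nonempty h, ?_⟩
    rintro x ⟨p, hp, rfl⟩
    obtain ⟨hp0, hp1⟩ := hsub s a hp
    calc Finset.univ.inf' Finset.univ_nonempty h
        = ∑ s', p s' * Finset.univ.inf' Finset.univ_nonempty h := by
          rw [← Finset.sum_mul, hp1, one_mul]
      _ ≤ ∑ s', p s' * h s' :=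
          Finset.sum_le_sum fun s' _ =>
            mul_le_mul_of_nonneg_left (myInf_le h s') (hp0 s')
  rw [sigma', sigma', ← sub_le_iff_le_add]
  obtain ⟨p0, hp0mem⟩ := hne s a
  have hne2 : {x : ℝ | ∃ p ∈ P s a, x = ∑ s', p s' * h2 s'}.Nonempty :=
    ⟨∑ s', p0 s' * h2 s', ⟨p0, hp0mem, rfl⟩⟩
  apply le_csInf hne2
  rintro x ⟨p, hp, rfl⟩
  obtain ⟨hpnn, hp1⟩ := hsub s a hp
  rw [sub_le_iff_le_add]
  calc sInf {x : ℝ | ∃ p ∈ P s a, x = ∑ s', p s' * h1 s'} ≤ ∑ s', p s' * h1 s' :=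
        csInf_le (bdd h1) ⟨p, hp, rfl⟩
    _ ≤ ∑ s', (p s' * h2 s' + p s' * Finset.univ.sup' Finset.univ_nonempty (fun s' => h1 s' - h2 s')) := by
        refine Finset.sum_le_sum fun s' _ => ?_
        have hle : h1 s' - h2 s' ≤ Finset.univ.sup' Finset.univ_nonempty (fun s' => h1 s' - h2 s') :=
          le_mySup (fun s' => h1 s' - h2 s') s'
        nlinarith [hpnn s']
    _ = ∑ s', p s' * h2 s' + Finset.univ.sup' Finset.univ_nonempty (fun s' => h1 s' - h2 s') := by
        rw [Finset.sum_add_distrib, ← Finset.sum_mul, hp1, one_mul]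

lemma bellman_span_nonexp (P : S → A → Set (S → ℝ))
    (hne : ∀ s a, (P s a).Nonempty) (hsub : ∀ s a, P s a ⊆ stdSimplex ℝ S)
    (r : S → A → ℝ) (Q Q' : S × A → ℝ) :
    spanSN (bellman P r Q - bellman P r Q') ≤ spanSN (Q - Q') := by
  set h1 : S → ℝ := fun s' => Finset.univ.sup' Finset.univ_nonempty fun a' => Q (s', a') with hh1
  set h2 : S → ℝ := fun s' => Finset.univ.sup' Finset.univ_nonempty fun a' => Q' (s', a') with hh2
  have hdiff : ∀ sa : S × A, (bellman P r Q - bellman P r Q') sa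
      = sigma' P h1 sa.1 sa.2 - sigma' P h2 sa.1 sa.2 := by
    intro sa; simp only [Pi.sub_apply, bellman]; ring
  have hup : ∀ sa : S × A, (bellman P r Q - bellman P r Q') sa
      ≤ Finset.univ.sup' Finset.univ_nonempty (fun s' => h1 s' - h2 s') := by
    intro sa
    rw [hdiff]
    have := sigma'_le_aux P hne hsub h1 h2 sa.1 sa.2
    linarith
  have hlo : ∀ sa : S × A,
      -(Finset.univ.sup' Finset.univ_nonempty (fun s' => h2 s' - h1 s'))
      ≤ (bellman P r Q - bellman P r Q') sa := by
    intro sa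
    rw [hdiff]
    have := sigma'_le_aux P hne hsub h2 h1 sa.1 sa.2
    linarith
  have hA : Finset.univ.sup' Finset.univ_nonempty (fun s' => h1 s' - h2 s')
      ≤ Finset.univ.sup' Finset.univ_nonempty (fun sa : S × A => (Q - Q') sa) := by
    apply Finset.sup'_le
    intro s _
    obtain ⟨a, _, ha⟩ := Finset.exists_mem_eq_sup' (Finset.univ_nonempty)
      (fun a' => Q (s, a'))
    have hQ'a : Q' (s, a) ≤ h2 s := le_mySup (fun a' => Q' (s, a')) a
    have hpair : (Q - Q') (s, a)
        ≤ Finset.univ.sup' Finset.univ_nonempty (fun sa : S × A => (Q - Q') sa) :=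
      le_mySup (fun sa : S × A => (Q - Q') sa) (s, a)
    simp only [Pi.sub_apply] at hpair ⊢
    have : h1 s = Q (s, a) := ha
    linarith
  have hB : Finset.univ.sup' Finset.univ_nonempty (fun s' => h2 s' - h1 s')
      ≤ -(Finset.univ.inf' Finset.univ_nonempty (fun sa : S × A => (Q - Q') sa)) := by
    apply Finset.sup'_le
    intro s _
    obtain ⟨a, _, ha⟩ := Finset.exists_mem_eq_sup' (Finset.univ_nonempty)
      (fun a' => Q' (s, a'))
    have hQa : Q (s, a) ≤ h1 s := le_mySup (fun a' => Q (s, a')) a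
    have hpair : Finset.univ.inf' Finset.univ_nonempty (fun sa : S × A => (Q - Q') sa)
        ≤ (Q - Q') (s, a) :=
      myInf_le (fun sa : S × A => (Q - Q') sa) (s, a)
    simp only [Pi.sub_apply] at hpair ⊢
    have : h2 s = Q' (s, a) := ha
    linarith
  have hsup : Finset.univ.sup' Finset.univ_nonempty (bellman P r Q - bellman P r Q')
      ≤ Finset.univ.sup' Finset.univ_nonempty (fun s' => h1 s' - h2 s') :=
    Finset.sup'_le _ _ fun sa _ => hup sa
  have hinf : -(Finset.univ.sup' Finset.univ_nonempty (fun s' => h2 s' - h1 s'))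
      ≤ Finset.univ.inf' Finset.univ_nonempty (bellman P r Q - bellman P r Q') :=
    Finset.le_inf' _ _ fun sa _ => hlo sa
  have hspan : spanSN (Q - Q') = Finset.univ.sup' Finset.univ_nonempty (fun sa : S × A => (Q - Q') sa)
      - Finset.univ.inf' Finset.univ_nonempty (fun sa : S × A => (Q - Q') sa) := rfl
  simp only [spanSN] at *
  linarith

end auxBellman

/-- Simplified consecutive-difference bound from the proof of the paper's
Theorem A1. -/
theorem stmt17 {S A : Type*} [Fintype S] [Fintype A] [Nonempty S] [Nonempty A]
    (P : S → A → Set (S → ℝ))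
    (hne : ∀ s a, (P s a).Nonempty)
    (hsub : ∀ s a, P s a ⊆ stdSimplex ℝ S)
    (r : S → A → ℝ)
    (Qstar : S × A → ℝ) (gstar : ℝ)
    (hstar : bellman P r Qstar = Qstar + gstar • (1 : S × A → ℝ))
    (ε : ℝ) (hε : 0 ≤ ε) (n : ℕ)
    (Q T : ℕ → (S × A → ℝ))
    (hrec : ∀ k, 1 ≤ k → k ≤ n →
      Q k = (2 / ((k : ℝ) + 2)) • Q 0 + ((k : ℝ) / ((k : ℝ) + 2)) • T (k - 1))
    (happrox : ∀ k ≤ n, supNorm (T k - bellman P r (Q k)) ≤ ε)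
    (hTQ : ∀ k, 1 ≤ k → k ≤ n → spanSN (T k - T (k - 1)) ≤ spanSN (Q k - Q (k - 1))) :
    ∀ k, 1 ≤ k → k ≤ n →
      spanSN (Q k - Q (k - 1)) ≤ 4 * spanSN (Q 0 - Qstar) / ((k : ℝ) + 1) + 2 * ε := by
  set S0 := spanSN (Q 0 - Qstar) with hS0def
  have hS0 : 0 ≤ S0 := spanSN_nonneg _
  -- Bound: Sp(T j - Q*) ≤ 2ε + Sp(Q j - Q*)
  have hTstar : ∀ j, j ≤ n → spanSN (T j - Qstar) ≤ 2 * ε + spanSN (Q j - Qstar) := by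
    intro j hj
    have hid : T j - Qstar = (T j - bellman P r (Q j))
        + ((bellman P r (Q j) - bellman P r Qstar) + gstar • (1 : S × A → ℝ)) := by
      rw [hstar]; abel
    calc spanSN (T j - Qstar)
        ≤ spanSN (T j - bellman P r (Q j))
          + spanSN ((bellman P r (Q j) - bellman P r Qstar) + gstar • (1 : S × A → ℝ)) := by
          rw [hid]; exact spanSN_add_le _ _
      _ ≤ 2 * ε + spanSN (Q j - Qstar) := by
          have h1 : spanSN (T j - bellman P r (Q j)) ≤ 2 * ε := by
            have := spanSN_le_two_supNorm (T j - bellman P r (Q j))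
            have := happrox j hj
            linarith
          have h2 := spanSN_add_const_le (bellman P r (Q j) - bellman P r Qstar) gstar
          have h3 := bellman_span_nonexp P hne hsub r (Q j) Qstar
          linarith
  -- Bound: Sp(Q j - Q*) ≤ S0 + 2jε
  have hQstarB : ∀ j, j ≤ n → spanSN (Q j - Qstar) ≤ S0 + 2 * j * ε := by
    intro j
    induction j with
    | zero => intro _; simp [← hS0def]
    | succ j ih =>
      intro hj
      have hj' : j ≤ n := by omega
      have hQrec := hrec (j + 1) (by omega) hj
      have hsub1 : (j + 1 : ℕ) - 1 = j := by omega
      rw [hsub1] at hQrec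
      push_cast at hQrec
      set x : ℝ := (j : ℝ) with hx
      have hx0 : (0:ℝ) ≤ x := Nat.cast_nonneg j
      have hx3 : x + 3 ≠ 0 := by positivity
      have hid : Q (j + 1) - Qstar
          = (2 / (x + 3)) • (Q 0 - Qstar) + ((x + 1) / (x + 3)) • (T j - Qstar) := by
        rw [hQrec]
        funext sa
        simp only [Pi.add_apply, Pi.sub_apply, Pi.smul_apply, smul_eq_mul]
        field_simp
        ring
      have hb1 : spanSN ((2 / (x + 3)) • (Q 0 - Qstar)) ≤ (2 / (x + 3)) * S0 :=
        spanSN_smul_le _ (by positivity) _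
      have hb2 : spanSN (((x + 1) / (x + 3)) • (T j - Qstar))
          ≤ ((x + 1) / (x + 3)) * spanSN (T j - Qstar) :=
        spanSN_smul_le _ (by positivity) _
      have hb3 := hTstar j hj'
      have hb4 := ih hj'
      have hchain : spanSN (Q (j + 1) - Qstar)
          ≤ (2 / (x + 3)) * S0 + ((x + 1) / (x + 3)) * (2 * ε + (S0 + 2 * x * ε)) := by
        have := spanSN_add_le ((2 / (x + 3)) • (Q 0 - Qstar)) (((x + 1) / (x + 3)) • (T j - Qstar))
        rw [← hid] at this
        have hc : ((x + 1) / (x + 3)) * spanSN (T j - Qstar)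
            ≤ ((x + 1) / (x + 3)) * (2 * ε + (S0 + 2 * x * ε)) := by
          apply mul_le_mul_of_nonneg_left _ (by positivity)
          linarith
        linarith
      have harith : (2 / (x + 3)) * S0 + ((x + 1) / (x + 3)) * (2 * ε + (S0 + 2 * x * ε))
          ≤ S0 + 2 * (x + 1) * ε := by
        rw [← sub_nonneg]
        have heq : S0 + 2 * (x + 1) * ε
            - ((2 / (x + 3)) * S0 + ((x + 1) / (x + 3)) * (2 * ε + (S0 + 2 * x * ε)))
            = (4 * (x + 1) * ε) / (x + 3) := by
          field_simp
          ring
        rw [heq]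
        positivity
      push_cast
      linarith
  -- Key consecutive-difference bound
  have key : ∀ m : ℕ, m + 1 ≤ n →
      spanSN (Q (m + 1) - Q m) ≤ 4 * S0 / ((m : ℝ) + 2) + 2 * ε := by
    intro m
    induction m with
    | zero =>
      intro hn1
      have hQrec := hrec 1 le_rfl hn1
      norm_num at hQrec
      have hid : Q 1 - Q 0 = (1 / 3 : ℝ) • (T 0 - Q 0) := by
        rw [hQrec]
        funext sa
        simp only [Pi.add_apply, Pi.sub_apply, Pi.smul_apply, smul_eq_mul]
        ring
      have hb1 : spanSN (Q 1 - Q 0) ≤ (1 / 3 : ℝ) * spanSN (T 0 - Q 0) := by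
        rw [hid]; exact spanSN_smul_le _ (by norm_num) _
      have hb2 : spanSN (T 0 - Q 0) ≤ spanSN (T 0 - Qstar) + spanSN (Q 0 - Qstar) := by
        have hid2 : T 0 - Q 0 = (T 0 - Qstar) - (Q 0 - Qstar) := by abel
        rw [hid2]; exact spanSN_sub_le _ _
      have hb3 := hTstar 0 (by omega)
      have hb4 := hQstarB 0 (by omega)
      push_cast at hb4 ⊢
      norm_num at hb4 ⊢
      linarith
    | succ m ih =>
      intro hn
      have hn' : m + 1 ≤ n := by omega
      have ihb := ih hn'
      set x : ℝ := (m : ℝ) with hx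
      have hx0 : (0:ℝ) ≤ x := Nat.cast_nonneg m
      have hx2 : x + 2 ≠ 0 := by positivity
      have hx3 : x + 3 ≠ 0 := by positivity
      have hx4 : x + 4 ≠ 0 := by positivity
      have hQr2 := hrec (m + 2) (by omega) (by omega)
      have hQr1 := hrec (m + 1) (by omega) hn'
      have hs2 : (m + 2 : ℕ) - 1 = m + 1 := by omega
      have hs1 : (m + 1 : ℕ) - 1 = m := by omega
      rw [hs2] at hQr2
      rw [hs1] at hQr1
      push_cast at hQr2 hQr1
      have hid : Q (m + 2) - Q (m + 1)
          = ((x + 2) / (x + 4)) • (T (m + 1) - T m)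
            + (2 / ((x + 3) * (x + 4))) • (T m - Q 0) := by
        rw [hQr2, hQr1]
        funext sa
        simp only [Pi.add_apply, Pi.sub_apply, Pi.smul_apply, smul_eq_mul]
        field_simp
        ring
      -- bound Sp(T(m+1) - T m)
      have hT1 : spanSN (T (m + 1) - T m) ≤ 4 * S0 / (x + 2) + 2 * ε := by
        have h := hTQ (m + 1) (by omega) hn'
        rw [hs1] at h
        linarith
      -- bound Sp(T m - Q 0)
      have hT2 : spanSN (T m - Q 0) ≤ 2 * S0 + (2 * x + 2) * ε := by
        have hid2 : T m - Q 0 = (T m - Qstar) - (Q 0 - Qstar) := by abel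
        have h1 : spanSN (T m - Q 0) ≤ spanSN (T m - Qstar) + spanSN (Q 0 - Qstar) := by
          rw [hid2]; exact spanSN_sub_le _ _
        have h2 := hTstar m (by omega)
        have h3 := hQstarB m (by omega)
        rw [← hS0def] at h1
        linarith
      have hb1 : spanSN (((x + 2) / (x + 4)) • (T (m + 1) - T m))
          ≤ ((x + 2) / (x + 4)) * (4 * S0 / (x + 2) + 2 * ε) := by
        refine (spanSN_smul_le _ (by positivity) _).trans ?_
        exact mul_le_mul_of_nonneg_left hT1 (by positivity)
      have hb2 : spanSN ((2 / ((x + 3) * (x + 4))) • (T m - Q 0))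
          ≤ (2 / ((x + 3) * (x + 4))) * (2 * S0 + (2 * x + 2) * ε) := by
        refine (spanSN_smul_le _ (by positivity) _).trans ?_
        exact mul_le_mul_of_nonneg_left hT2 (by positivity)
      have hchain : spanSN (Q (m + 2) - Q (m + 1))
          ≤ ((x + 2) / (x + 4)) * (4 * S0 / (x + 2) + 2 * ε)
            + (2 / ((x + 3) * (x + 4))) * (2 * S0 + (2 * x + 2) * ε) := by
        have := spanSN_add_le (((x + 2) / (x + 4)) • (T (m + 1) - T m))
          ((2 / ((x + 3) * (x + 4))) • (T m - Q 0))
        rw [← hid] at this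
        linarith
      have harith : ((x + 2) / (x + 4)) * (4 * S0 / (x + 2) + 2 * ε)
          + (2 / ((x + 3) * (x + 4))) * (2 * S0 + (2 * x + 2) * ε)
          ≤ 4 * S0 / (x + 3) + 2 * ε := by
        rw [← sub_nonneg]
        have heq : 4 * S0 / (x + 3) + 2 * ε
            - (((x + 2) / (x + 4)) * (4 * S0 / (x + 2) + 2 * ε)
              + (2 / ((x + 3) * (x + 4))) * (2 * S0 + (2 * x + 2) * ε))
            = (8 * ε) / ((x + 3) * (x + 4)) := by
          field_simp
          ring
        rw [heq]
        positivity
      have hfin : spanSN (Q (m + 2) - Q (m + 1)) ≤ 4 * S0 / (x + 3) + 2 * ε :=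
        hchain.trans harith
      have hgoalcast : ((m + 1 : ℕ) : ℝ) + 2 = x + 3 := by push_cast; ring
      show spanSN (Q (m + 1 + 1) - Q (m + 1)) ≤ 4 * S0 / (((m + 1 : ℕ) : ℝ) + 2) + 2 * ε
      rw [hgoalcast]
      exact hfin
  intro k hk1 hkn
  obtain ⟨m, rfl⟩ : ∃ m, k = m + 1 := ⟨k - 1, by omega⟩
  have hsub1 : (m + 1 : ℕ) - 1 = m := by omega
  rw [hsub1]
  have hcast : ((m + 1 : ℕ) : ℝ) + 1 = (m : ℝ) + 2 := by push_cast; ring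
  rw [hcast]
  exact key m hkn
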